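/- Let d ≥ 5 be an integer and κ ∈ {−2, 0, 2} (with 3 | d when κ = ±2). No four distinct lines of the arrangement 𝒜^{(κ)}_d are concurrent: for pairwise distinct λ, μ, ν, ρ ∈ {0, …, d−1}, there is no point lying on all four lines ℓ_{φ_λ}, ℓ_{φ_μ}, ℓ_{φ_ν}, ℓ_{φ_ρ}. Consequently every intersection point of the arrangement lies on at most three of its lines. -/

import Mathlib

open Real

/-- The tangent line `ℓ_φ = {e^{-2iφ} + t e^{iφ} : t ∈ ℝ}` of the deltoid. -/
noncomputable def tline (φ : ℝ) : Set ℂ :=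
  {w : ℂ | ∃ t : ℝ, w = Complex.exp (((-(2 * φ) : ℝ) : ℂ) * Complex.I) +
      (t : ℂ) * Complex.exp ((φ : ℂ) * Complex.I)}

/-- If `w ∈ ℓ_φ`, then `v = e^{2iφ}` is a root of the cubic `v³ - w̄v² + wv - 1`. -/
lemma tline_root {w : ℂ} {φ : ℝ} (hw : w ∈ tline φ) :
    (Complex.exp (((2*φ : ℝ) : ℂ) * Complex.I))^3
      - (starRingEnd ℂ w) * (Complex.exp (((2*φ : ℝ) : ℂ) * Complex.I))^2
      + w * Complex.exp (((2*φ : ℝ) : ℂ) * Complex.I) - 1 = 0 := by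
  obtain ⟨t, rfl⟩ := hw
  set E := Complex.exp ((φ : ℂ) * Complex.I) with hE
  have hE0 : E ≠ 0 := Complex.exp_ne_zero _
  have h2 : Complex.exp (((2*φ : ℝ) : ℂ) * Complex.I) = E^2 := by
    rw [hE, ← Complex.exp_nat_mul]; congr 1; push_cast; ring
  have hm2 : Complex.exp (((-(2*φ) : ℝ) : ℂ) * Complex.I) = (E^2)⁻¹ := by
    rw [hE, ← Complex.exp_nat_mul, ← Complex.exp_neg]; congr 1; push_cast; ring
  have c1 : (starRingEnd ℂ) (Complex.exp (((-(2*φ) : ℝ) : ℂ) * Complex.I)) = E^2 := by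
    rw [← Complex.exp_conj, hE, ← Complex.exp_nat_mul]; congr 1
    simp [Complex.conj_I, map_ofNat]; ring
  have c2 : (starRingEnd ℂ) ((t:ℂ) * E) = (t:ℂ) * E⁻¹ := by
    rw [map_mul, Complex.conj_ofReal, hE, ← Complex.exp_conj, ← Complex.exp_neg]; congr 2
    simp [Complex.conj_I]
  rw [map_add, c1, c2, h2, hm2]
  field_simp
  ring

/-- The map `j ↦ e^{2iφ_j}` is injective for `j < d` when consecutive angles differ by `π/d`. -/
lemma exp_inj (d : ℕ) (hd : 0 < d) (φ : ℕ → ℝ)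
    (hdiff : ∀ j k : ℕ, φ j - φ k = (((j:ℝ) - k)) * π / d)
    {j k : ℕ} (hj : j < d) (hk : k < d)
    (h : Complex.exp (((2*φ j : ℝ) : ℂ) * Complex.I) =
         Complex.exp (((2*φ k : ℝ) : ℂ) * Complex.I)) : j = k := by
  rw [Complex.exp_eq_exp_iff_exists_int] at h
  obtain ⟨n, hn⟩ := h
  have h2 : ((2*φ j : ℝ):ℂ) = ((2*φ k + n * (2*π) : ℝ):ℂ) := by
    apply mul_right_cancel₀ Complex.I_ne_zero
    push_cast [] at hn ⊢
    linear_combination hn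
  have h3 : 2*φ j = 2*φ k + n*(2*π) := by exact_mod_cast h2
  have hd0 : (d:ℝ) ≠ 0 := Nat.cast_ne_zero.mpr hd.ne'
  have hφd := hdiff j k
  have h4 : ((j:ℝ) - k) * π = ((n:ℝ) * d) * π := by
    have : (φ j - φ k) * d = ((j:ℝ) - k) * π := by
      rw [hφd, div_mul_cancel₀ _ hd0]
    nlinarith [this]
  have h5 : (j:ℝ) - k = (n:ℝ) * d := mul_right_cancel₀ Real.pi_ne_zero h4
  have h6 : (j:ℤ) - k = n * d := by exact_mod_cast h5
  have hjd : (j:ℤ) < d := by exact_mod_cast hj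
  have hkd : (k:ℤ) < d := by exact_mod_cast hk
  have hj0 : (0:ℤ) ≤ j := Int.ofNat_nonneg j
  have hk0 : (0:ℤ) ≤ k := Int.ofNat_nonneg k
  have hdz : (0:ℤ) < d := by exact_mod_cast hd
  have : (j:ℤ) = k := by
    rcases lt_trichotomy n 0 with hn' | hn' | hn'
    · nlinarith
    · simp [hn'] at h6; omega
    · nlinarith
  exact_mod_cast this

open Polynomial in
/-- At most three lines of the arrangement pass through any point. -/
lemma ncard_lines_le (d : ℕ) (hd : 0 < d) (φ : ℕ → ℝ)
    (hdiff : ∀ j k : ℕ, φ j - φ k = (((j:ℝ) - k)) * π / d) (w : ℂ) :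
    Set.ncard {j : ℕ | j < d ∧ w ∈ tline (φ j)} ≤ 3 := by
  set p : ℂ[X] := X^3 - C ((starRingEnd ℂ) w) * X^2 + C w * X - 1 with hp
  have hpdeg : p.natDegree = 3 := by
    unfold p; compute_degree!
  have hp0 : p ≠ 0 := fun h => by simp [h] at hpdeg
  set S : Set ℕ := {j : ℕ | j < d ∧ w ∈ tline (φ j)} with hS
  set f : ℕ → ℂ := fun j => Complex.exp (((2*φ j : ℝ) : ℂ) * Complex.I) with hf
  have hinj : Set.InjOn f S := fun j hj k hk hjk =>
    exp_inj d hd φ hdiff hj.1 hk.1 hjk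
  have himg : f '' S ⊆ (p.roots.toFinset : Set ℂ) := by
    rintro v ⟨j, hj, rfl⟩
    simp only [Finset.coe_sort_coe, Multiset.mem_toFinset, Finset.mem_coe]
    rw [Polynomial.mem_roots hp0]
    have := tline_root hj.2
    show p.eval _ = 0
    simp [hp]
    linear_combination this
  calc S.ncard = (f '' S).ncard := (Set.ncard_image_of_injOn hinj).symm
    _ ≤ (p.roots.toFinset : Set ℂ).ncard :=
        Set.ncard_le_ncard himg (Set.finite_coe_iff.mp inferInstance)
    _ = p.roots.toFinset.card := Set.ncard_coe_finset _
    _ ≤ Multiset.card p.roots := Multiset.toFinset_card_le _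
    _ ≤ p.natDegree := Polynomial.card_roots' p
    _ = 3 := hpdeg

theorem stmt_8 (d : ℕ) (hd : 5 ≤ d) (κ : ℤ) (hκ : κ = -2 ∨ κ = 0 ∨ κ = 2)
    (hκd : κ ≠ 0 → (3 : ℤ) ∣ (d : ℤ)) :
    let φ : ℕ → ℝ := fun j => (3 * (j : ℝ) - (κ : ℝ)) * π / (3 * d)
    (∀ a b c e : ℕ, a < d → b < d → c < d → e < d →
      a ≠ b → a ≠ c → a ≠ e → b ≠ c → b ≠ e → c ≠ e →
      ¬ ∃ w : ℂ, w ∈ tline (φ a) ∧ w ∈ tline (φ b) ∧ w ∈ tline (φ c) ∧ w ∈ tline (φ e)) ∧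
    (∀ w : ℂ, Set.ncard {j : ℕ | j < d ∧ w ∈ tline (φ j)} ≤ 3) := by
  intro φ
  have hd0 : 0 < d := by omega
  have hdR : (d:ℝ) ≠ 0 := Nat.cast_ne_zero.mpr hd0.ne'
  have hdiff : ∀ j k : ℕ, φ j - φ k = (((j:ℝ) - k)) * π / d := by
    intro j k
    show (3 * (j : ℝ) - κ) * π / (3 * d) - (3 * (k : ℝ) - κ) * π / (3 * d) = _
    field_simp
    ring
  have hcount := fun w => ncard_lines_le d hd0 φ hdiff w
  refine ⟨?_, hcount⟩
  intro a b c e ha hb hc he hab hac hae hbc hbe hce ⟨w, hwa, hwb, hwc, hwe⟩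
  have hsub : (↑({a, b, c, e} : Finset ℕ) : Set ℕ) ⊆ {j : ℕ | j < d ∧ w ∈ tline (φ j)} := by
    intro j hj
    simp only [Finset.coe_insert, Finset.coe_singleton, Set.mem_insert_iff,
      Set.mem_singleton_iff] at hj
    rcases hj with rfl | rfl | rfl | rfl
    · exact ⟨ha, hwa⟩
    · exact ⟨hb, hwb⟩
    · exact ⟨hc, hwc⟩
    · exact ⟨he, hwe⟩
  have hcard : ({a, b, c, e} : Finset ℕ).card = 4 := by
    rw [Finset.card_insert_of_notMem (by simp [hab, hac, hae]),
      Finset.card_insert_of_notMem (by simp [hbc, hbe]),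
      Finset.card_insert_of_notMem (by simp [hce]), Finset.card_singleton]
  have hfin : ({j : ℕ | j < d ∧ w ∈ tline (φ j)}).Finite :=
    Set.Finite.subset (Set.finite_lt_nat d) (fun j hj => hj.1)
  have h4 : 4 ≤ Set.ncard {j : ℕ | j < d ∧ w ∈ tline (φ j)} := by
    calc 4 = ({a, b, c, e} : Finset ℕ).card := hcard.symm
      _ = (↑({a, b, c, e} : Finset ℕ) : Set ℕ).ncard := (Set.ncard_coe_finset _).symm
      _ ≤ _ := Set.ncard_le_ncard hsub hfin
  have := hcount w
  omega
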